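/- Let X be a δ-hyperbolic graph and let c be a vertex. If e and e' are two oriented edges originating at c, each lying as the first edge of some geodesic from c to the same point a, then the angle at c between e and the reverse of e' is at most 6δ. -/

import Mathlib

/-- A graph: vertices, oriented edges, origin/terminus maps, and a
fixed-point-free edge-reversing involution. -/
structure MGraph where
  V : Type
  E : Type
  o : E → V
  t : E → V
  rev : E → E
  rev_o : ∀ e, o (rev e) = t e
  rev_t : ∀ e, t (rev e) = o e
  rev_rev : ∀ e, rev (rev e) = e
  rev_ne : ∀ e, rev e ≠ e

namespace MGraph

variable (X : MGraph)

/-- A walk from `x` to `y` given by a list of consecutive edges. -/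
def IsWalk : List X.E → X.V → X.V → Prop
  | [], x, y => x = y
  | e :: es, x, y => X.o e = x ∧ IsWalk es (X.t e) y

/-- The vertices visited by a walk starting at `x`. -/
def walkVerts : X.V → List X.E → List X.V
  | x, [] => [x]
  | x, e :: es => x :: walkVerts (X.t e) es

/-- The graph metric (length of each edge is 1), valued in `ℕ∞`. -/
noncomputable def dist (x y : X.V) : ℕ∞ :=
  sInf {n : ℕ∞ | ∃ es, X.IsWalk es x y ∧ (es.length : ℕ∞) = n}

/-- The distance from `x` to `y` in the graph with the vertex `v` removed. -/
noncomputable def delDist (v x y : X.V) : ℕ∞ :=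
  sInf {n : ℕ∞ | ∃ es, X.IsWalk es x y ∧ v ∉ X.walkVerts x es ∧ (es.length : ℕ∞) = n}

/-- The angle at `v = t e1 = o e2` between two edges `e1, e2`: the distance
from `o e1` to `t e2` in the graph with the vertex `t e1` removed. -/
noncomputable def angle (e1 e2 : X.E) : ℕ∞ :=
  X.delDist (X.t e1) (X.o e1) (X.t e2)

/-- A geodesic is a walk whose length realizes the distance. -/
def IsGeodesic (es : List X.E) (x y : X.V) : Prop :=
  X.IsWalk es x y ∧ (es.length : ℕ∞) = X.dist x y

/-- `∠_c(x1,x2) > θ` : there are edges `e1, e2` with `t e1 = o e2 = c`, each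
lying on a geodesic between `c` and `x_i`, making an angle `> θ` at `c`. -/
def AngleGT (c x1 x2 : X.V) (θ : ℕ∞) : Prop :=
  ∃ (e1 e2 : X.E) (es1 es2 : List X.E), X.t e1 = c ∧ X.o e2 = c ∧
    X.IsGeodesic (X.rev e1 :: es1) c x1 ∧ X.IsGeodesic (e2 :: es2) c x2 ∧
    θ < X.angle e1 e2

/-- All pairs of consecutive edges of a walk make an angle at most `θ`. -/
def AngleBounded (θ : ℕ∞) : List X.E → Prop
  | [] => True
  | [_] => True
  | e :: e' :: es => X.angle e e' ≤ θ ∧ AngleBounded θ (e' :: es)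

/-- `v` is a vertex of the cone of parameter `θ` around the oriented edge `e`:
it lies on a path starting at `o e` by the edge `e`, of length at most `θ`,
whose consecutive edges make angles at most `θ`. -/
def InConeV (θ : ℕ∞) (e : X.E) (v : X.V) : Prop :=
  ∃ (es : List X.E) (y : X.V), X.IsWalk (e :: es) (X.o e) y ∧
    ((e :: es).length : ℕ∞) ≤ θ ∧ X.AngleBounded θ (e :: es) ∧
    v ∈ X.walkVerts (X.o e) (e :: es)

/-- `ε` is an edge of the cone of parameter `θ` around the oriented edge `e`. -/
def InConeE (θ : ℕ∞) (e ε : X.E) : Prop :=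
  ∃ (es : List X.E) (y : X.V), X.IsWalk (e :: es) (X.o e) y ∧
    ((e :: es).length : ℕ∞) ≤ θ ∧ X.AngleBounded θ (e :: es) ∧
    (ε ∈ e :: es ∨ X.rev ε ∈ e :: es)

/-- A graph is fine if for each edge `e` and each `L`, only finitely many
edges arrive at `o e` making an angle at most `L` with `e`. -/
def Fine : Prop :=
  ∀ (e : X.E) (L : ℕ), {e' : X.E | X.t e' = X.o e ∧ X.angle e' e ≤ (L : ℕ∞)}.Finite

/-- δ-hyperbolicity: geodesic triangles are δ-thin. -/
def Hyperbolic (δ : ℕ) : Prop :=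
  ∀ (a b c : X.V) (p q r : List X.E),
    X.IsGeodesic p a b → X.IsGeodesic q b c → X.IsGeodesic r a c →
    ∀ v ∈ X.walkVerts a p, ∃ w, (w ∈ X.walkVerts b q ∨ w ∈ X.walkVerts a r) ∧
      X.dist v w ≤ (δ : ℕ∞)

/-- The four point inequality form of δ-hyperbolicity. -/
def FourPoint (δ : ℕ) : Prop :=
  ∀ a x y y' : X.V,
    X.dist a x + X.dist y y' ≤
      max (X.dist a y + X.dist y' x) (X.dist a y' + X.dist y x) + (δ : ℕ∞)

/-- Connectedness. -/
def Connected : Prop := ∀ x y : X.V, ∃ es, X.IsWalk es x y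

/-- `t` is on an `α`-geodesic between `x` and `a`. -/
def OnAlphaGeod (α : ℕ∞) (t x a : X.V) : Prop :=
  X.dist x t + X.dist t a ≤ X.dist x a + α

/-- The set `𝓔_{a,x}(ρ)` of edges at distance `ρ` from `a` lying on
geodesics between `a` and `x`. -/
def GeodEdgeAt (a x : X.V) (ρ : ℕ∞) (e : X.E) : Prop :=
  X.dist a (X.o e) = ρ ∧ ∃ es, (X.IsGeodesic es a x ∨ X.IsGeodesic es x a) ∧ e ∈ es

/-- The set `U_α[a,x]` of points on `α`-conical-geodesics between `x` and `a`. -/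
def ConicalSet (α : ℕ) (a x : X.V) : Set X.V :=
  {t | X.OnAlphaGeod (α : ℕ∞) t x a ∧ X.dist a t ≤ X.dist a x ∧
       ∀ e, X.GeodEdgeAt a x (X.dist a t) e → X.InConeV ((40 * α : ℕ) : ℕ∞) e t}

end MGraph

/-!
Let `γ = e :: es` and `γ' = e' :: es'` be the two geodesics from `c` to `a`. Pick `v` on `γ'`
with `d(c, v) = δ + 1` (or `v = a` if `d(c, a) ≤ δ`); thinness of the bigon `γ, γ'` gives `w`
on `γ` with `d(v, w) ≤ δ`. Go from `t e'` to `v` along `γ'`, then by a geodesic to `w`, then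
back along `γ` to `t e`. The first and last pieces avoid `c` because geodesics never revisit
their origin, and the middle one because it is shorter than `d(v, c)`; the whole path has
length at most `4δ`.
-/

theorem ENat.sInf_mem_of_ne_top {s : Set ℕ∞} (h : sInf s ≠ ⊤) : sInf s ∈ s :=
  csInf_mem (Set.nonempty_iff_ne_empty.2 fun hs => h (by rw [hs, sInf_empty]))

namespace MGraph

variable {X : MGraph}

theorem IsWalk.append {es₁ es₂ : List X.E} {x y z : X.V}
    (h₁ : X.IsWalk es₁ x y) (h₂ : X.IsWalk es₂ y z) : X.IsWalk (es₁ ++ es₂) x z := by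
  induction es₁ generalizing x with
  | nil => cases h₁; exact h₂
  | cons f fs ih => exact ⟨h₁.1, ih h₁.2⟩

theorem IsWalk.reverse {es : List X.E} {x y : X.V} (h : X.IsWalk es x y) :
    X.IsWalk (es.map X.rev).reverse y x := by
  induction es generalizing x with
  | nil => cases h; rfl
  | cons f fs ih =>
    obtain ⟨rfl, h⟩ := h
    have hf : X.IsWalk [X.rev f] (X.t f) (X.o f) := ⟨X.rev_o f, X.rev_t f⟩
    simpa using (ih h).append hf

theorem start_mem_walkVerts (x : X.V) (es : List X.E) : x ∈ X.walkVerts x es := by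
  cases es <;> simp [walkVerts]

theorem IsWalk.end_mem_walkVerts {es : List X.E} {x y : X.V} (h : X.IsWalk es x y) :
    y ∈ X.walkVerts x es := by
  induction es generalizing x with
  | nil => cases h; simp [walkVerts]
  | cons f fs ih => exact List.mem_cons_of_mem _ (ih h.2)

theorem mem_walkVerts_append {es₁ es₂ : List X.E} {x y v : X.V} (h : X.IsWalk es₁ x y) :
    v ∈ X.walkVerts x (es₁ ++ es₂) ↔
      v ∈ X.walkVerts x es₁ ∨ v ∈ X.walkVerts y es₂ := by
  induction es₁ generalizing x with
  | nil =>
    cases h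
    simp only [List.nil_append, walkVerts, List.mem_singleton]
    exact ⟨Or.inr, by rintro (rfl | hv); exacts [start_mem_walkVerts _ _, hv]⟩
  | cons f fs ih =>
    obtain ⟨rfl, h⟩ := h
    simp only [List.cons_append, walkVerts, List.mem_cons, ih h, or_assoc]

theorem mem_walkVerts_reverse {es : List X.E} {x y v : X.V} (h : X.IsWalk es x y) :
    v ∈ X.walkVerts y (es.map X.rev).reverse ↔ v ∈ X.walkVerts x es := by
  induction es generalizing x with
  | nil => cases h; rfl
  | cons f fs ih =>
    obtain ⟨rfl, h⟩ := h
    simp only [List.map_cons, List.reverse_cons]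
    rw [mem_walkVerts_append h.reverse, ih h]
    simp only [walkVerts, List.mem_cons, List.not_mem_nil, X.rev_t, or_false]
    have := start_mem_walkVerts (X.t f) fs
    constructor
    · rintro (hv | rfl | rfl) <;> simp_all
    · rintro (rfl | hv) <;> simp_all

theorem IsWalk.exists_split_of_mem {es : List X.E} {x y v : X.V}
    (h : X.IsWalk es x y) (hv : v ∈ X.walkVerts x es) :
    ∃ es₁ es₂, es = es₁ ++ es₂ ∧ X.IsWalk es₁ x v ∧ X.IsWalk es₂ v y := by
  induction es generalizing x with
  | nil =>
    obtain rfl : v = x := List.mem_singleton.1 hv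
    exact ⟨[], [], rfl, rfl, h⟩
  | cons f fs ih =>
    obtain ⟨rfl, h⟩ := h
    rcases List.mem_cons.1 hv with rfl | hv
    · exact ⟨[], f :: fs, rfl, rfl, rfl, h⟩
    · obtain ⟨es₁, es₂, rfl, h₁, h₂⟩ := ih h hv
      exact ⟨f :: es₁, es₂, rfl, ⟨rfl, h₁⟩, h₂⟩

theorem IsWalk.take_drop {es : List X.E} {x y : X.V} (h : X.IsWalk es x y) (n : ℕ) :
    ∃ v, X.IsWalk (es.take n) x v ∧ X.IsWalk (es.drop n) v y := by
  induction es generalizing x n with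
  | nil => exact ⟨x, by simp only [List.take_nil]; rfl, by simpa using h⟩
  | cons f fs ih =>
    cases n with
    | zero => exact ⟨x, rfl, h⟩
    | succ n =>
      obtain ⟨v, h₁, h₂⟩ := ih h.2 n
      exact ⟨v, ⟨h.1, h₁⟩, h₂⟩

theorem dist_le_length {es : List X.E} {x y : X.V} (h : X.IsWalk es x y) :
    X.dist x y ≤ es.length :=
  sInf_le ⟨es, h, rfl⟩

theorem exists_walk_length_eq_dist {x y : X.V} (h : X.dist x y ≠ ⊤) :
    ∃ es, X.IsWalk es x y ∧ (es.length : ℕ∞) = X.dist x y :=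
  ENat.sInf_mem_of_ne_top h

theorem dist_self (x : X.V) : X.dist x x = 0 :=
  nonpos_iff_eq_zero.1 (dist_le_length (es := []) rfl)

theorem dist_triangle (x y z : X.V) : X.dist x z ≤ X.dist x y + X.dist y z := by
  rcases eq_or_ne (X.dist x y) ⊤ with h₁ | h₁
  · simp [h₁]
  rcases eq_or_ne (X.dist y z) ⊤ with h₂ | h₂
  · simp [h₂]
  obtain ⟨es₁, hw₁, hl₁⟩ := exists_walk_length_eq_dist h₁
  obtain ⟨es₂, hw₂, hl₂⟩ := exists_walk_length_eq_dist h₂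
  simpa [← hl₁, ← hl₂] using dist_le_length (hw₁.append hw₂)

theorem dist_le_dist_symm (x y : X.V) : X.dist x y ≤ X.dist y x := by
  rcases eq_or_ne (X.dist y x) ⊤ with h | h
  · simp [h]
  obtain ⟨es, hw, hl⟩ := exists_walk_length_eq_dist h
  simpa [← hl] using dist_le_length hw.reverse

theorem dist_comm (x y : X.V) : X.dist x y = X.dist y x :=
  le_antisymm (dist_le_dist_symm x y) (dist_le_dist_symm y x)

theorem delDist_le_length {es : List X.E} {c x y : X.V} (h : X.IsWalk es x y)
    (hc : c ∉ X.walkVerts x es) : X.delDist c x y ≤ es.length :=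
  sInf_le ⟨es, h, hc, rfl⟩

theorem exists_walk_length_eq_delDist {c x y : X.V} (h : X.delDist c x y ≠ ⊤) :
    ∃ es, X.IsWalk es x y ∧ c ∉ X.walkVerts x es ∧ (es.length : ℕ∞) = X.delDist c x y :=
  ENat.sInf_mem_of_ne_top h

theorem delDist_triangle (c x y z : X.V) :
    X.delDist c x z ≤ X.delDist c x y + X.delDist c y z := by
  rcases eq_or_ne (X.delDist c x y) ⊤ with h₁ | h₁
  · simp [h₁]
  rcases eq_or_ne (X.delDist c y z) ⊤ with h₂ | h₂
  · simp [h₂]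
  obtain ⟨es₁, hw₁, hc₁, hl₁⟩ := exists_walk_length_eq_delDist h₁
  obtain ⟨es₂, hw₂, hc₂, hl₂⟩ := exists_walk_length_eq_delDist h₂
  have hc : c ∉ X.walkVerts x (es₁ ++ es₂) := by
    rw [mem_walkVerts_append hw₁]
    exact not_or.2 ⟨hc₁, hc₂⟩
  simpa [← hl₁, ← hl₂] using delDist_le_length (hw₁.append hw₂) hc

theorem delDist_le_delDist_symm (c x y : X.V) : X.delDist c x y ≤ X.delDist c y x := by
  rcases eq_or_ne (X.delDist c y x) ⊤ with h | h
  · simp [h]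
  obtain ⟨es, hw, hc, hl⟩ := exists_walk_length_eq_delDist h
  simpa [← hl] using delDist_le_length hw.reverse (by rwa [mem_walkVerts_reverse hw])

theorem delDist_comm (c x y : X.V) : X.delDist c x y = X.delDist c y x :=
  le_antisymm (delDist_le_delDist_symm c x y) (delDist_le_delDist_symm c y x)

theorem delDist_le_dist_of_dist_lt {c x y : X.V} (h : X.dist x y < X.dist x c) :
    X.delDist c x y ≤ X.dist x y := by
  obtain ⟨es, hw, hl⟩ := exists_walk_length_eq_dist (h.trans_le le_top).ne
  refine hl ▸ delDist_le_length hw fun hc => ?_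
  obtain ⟨es₁, es₂, rfl, hw₁, -⟩ := hw.exists_split_of_mem hc
  refine h.not_ge (le_trans (dist_le_length hw₁) ?_)
  simp [← hl]

theorem IsGeodesic.dist_eq_of_append {es₁ es₂ : List X.E} {x y v : X.V}
    (h : X.IsGeodesic (es₁ ++ es₂) x y) (h₁ : X.IsWalk es₁ x v)
    (h₂ : X.IsWalk es₂ v y) :
    X.dist x v = es₁.length := by
  have hxy : X.dist x y = (es₁.length : ℕ∞) + es₂.length := by simp [← h.2]
  have hv := dist_le_length h₁
  have hvy := dist_le_length h₂
  have htri := dist_triangle x v y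
  lift X.dist x v to ℕ using (hv.trans_lt (ENat.natCast_lt_top _)).ne with A
  lift X.dist v y to ℕ using (hvy.trans_lt (ENat.natCast_lt_top _)).ne with B
  rw [hxy] at htri
  norm_cast at hv hvy htri ⊢
  omega

theorem IsGeodesic.exists_dist_eq {es : List X.E} {x y : X.V} (h : X.IsGeodesic es x y)
    {n : ℕ} (hn : n ≤ es.length) : ∃ v ∈ X.walkVerts x es, X.dist x v = n := by
  obtain ⟨v, h₁, h₂⟩ := h.1.take_drop n
  rw [← List.take_append_drop n es] at h ⊢
  refine ⟨v, (mem_walkVerts_append h₁).2 (Or.inl h₁.end_mem_walkVerts), ?_⟩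
  rw [h.dist_eq_of_append h₁ h₂, List.length_take, min_eq_left hn]

theorem IsGeodesic.start_not_mem_tail {f : X.E} {fs : List X.E} {x y : X.V}
    (h : X.IsGeodesic (f :: fs) x y) : x ∉ X.walkVerts (X.t f) fs := fun hx => by
  obtain ⟨es₁, es₂, rfl, -, h₂⟩ := h.1.2.exists_split_of_mem hx
  have := h.2 ▸ dist_le_length h₂
  norm_cast at this
  simp at this

theorem IsGeodesic.delDist_add_one_le {f : X.E} {fs : List X.E} {x y w : X.V}
    (h : X.IsGeodesic (f :: fs) x y) (hw : w ∈ X.walkVerts (X.t f) fs) :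
    X.delDist x (X.t f) w + 1 ≤ X.dist x w := by
  obtain ⟨es₁, es₂, hfs, h₁, h₂⟩ := h.1.2.exists_split_of_mem hw
  have hc : x ∉ X.walkVerts (X.t f) es₁ := fun hx =>
    h.start_not_mem_tail (hfs ▸ (mem_walkVerts_append h₁).2 (Or.inl hx))
  rw [hfs, ← List.cons_append] at h
  rw [h.dist_eq_of_append ⟨h.1.1, h₁⟩ h₂, List.length_cons, Nat.cast_succ]
  gcongr
  exact delDist_le_length h₁ hc

theorem angle_rev_add_two_le {e e' : X.E} {es es' : List X.E} {c y y' v w : X.V}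
    (hγ : X.IsGeodesic (e :: es) c y) (hγ' : X.IsGeodesic (e' :: es') c y')
    (hv : v ∈ X.walkVerts c (e' :: es')) (hw : w ∈ X.walkVerts c (e :: es))
    (hvw : X.dist v w < X.dist c v) :
    X.angle (X.rev e') e + 2 ≤ 2 * X.dist c v + 2 * X.dist v w := by
  have hvc : v ≠ c := by rintro rfl; simp [dist_self] at hvw
  have hwc : w ≠ c := by rintro rfl; exact hvw.ne (dist_comm _ _)
  replace hv : v ∈ X.walkVerts (X.t e') es' := by simpa [walkVerts, hvc] using hv
  replace hw : w ∈ X.walkVerts (X.t e) es := by simpa [walkVerts, hwc] using hw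
  have h₁ := hγ'.delDist_add_one_le hv
  have h₂ : X.delDist c v w ≤ X.dist v w := delDist_le_dist_of_dist_lt (dist_comm c v ▸ hvw)
  have h₃ := (hγ.delDist_add_one_le hw).trans (dist_triangle c v w)
  have hangle : X.angle (X.rev e') e = X.delDist c (X.t e') (X.t e) := by
    simp [angle, X.rev_o, X.rev_t, hγ'.1.1]
  have hdetour : X.delDist c (X.t e') (X.t e) ≤
      X.delDist c (X.t e') v + X.delDist c v w + X.delDist c (X.t e) w := by
    rw [delDist_comm c (X.t e) w]
    exact (delDist_triangle c _ w _).trans (add_le_add_left (delDist_triangle c _ v _) _)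
  calc X.angle (X.rev e') e + 2
      ≤ X.delDist c (X.t e') v + X.delDist c v w + X.delDist c (X.t e) w + 2 := by
        rw [hangle]
        gcongr
    _ = (X.delDist c (X.t e') v + 1) + X.delDist c v w + (X.delDist c (X.t e) w + 1) := by
        ring
    _ ≤ X.dist c v + X.dist v w + (X.dist c v + X.dist v w) := by gcongr
    _ = 2 * X.dist c v + 2 * X.dist v w := by ring

theorem Hyperbolic.exists_near_of_bigon {δ : ℕ} (hδ : X.Hyperbolic δ) {es es' : List X.E}
    {x y v : X.V} (hγ : X.IsGeodesic es x y) (hγ' : X.IsGeodesic es' x y)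
    (hv : v ∈ X.walkVerts x es') : ∃ w ∈ X.walkVerts x es, X.dist v w ≤ δ := by
  obtain ⟨w, hw, hvw⟩ := hδ x y y es' [] es hγ' ⟨rfl, by simp [dist_self]⟩ hγ v hv
  refine ⟨w, ?_, hvw⟩
  rcases hw with hw | hw
  · rw [List.mem_singleton.1 hw]
    exact hγ.1.end_mem_walkVerts
  · exact hw

end MGraph

theorem stmt_2_general (X : MGraph) (δ : ℕ) (hδ : X.Hyperbolic δ)
    (c a : X.V) (e e' : X.E)
    (hg : ∃ es, X.IsGeodesic (e :: es) c a) (hg' : ∃ es, X.IsGeodesic (e' :: es) c a) :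
    X.angle (X.rev e') e ≤ ((6 * δ : ℕ) : ℕ∞) := by
  obtain ⟨es, hγ⟩ := hg
  obtain ⟨es', hγ'⟩ := hg'
  have hbound : X.angle (X.rev e') e + 2 ≤ ((4 * δ : ℕ) : ℕ∞) + 2 := by
    rcases le_or_gt (X.dist c a) δ with hshort | hlong
    · have hpos : X.dist a a < X.dist c a := by
        rw [MGraph.dist_self, ← hγ.2]
        exact_mod_cast Nat.succ_pos _
      calc X.angle (X.rev e') e + 2 ≤ 2 * X.dist c a + 2 * X.dist a a :=
            MGraph.angle_rev_add_two_le hγ hγ' hγ'.1.end_mem_walkVerts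
              hγ.1.end_mem_walkVerts hpos
        _ ≤ 2 * (δ : ℕ∞) + 2 * 0 := by rw [MGraph.dist_self]; gcongr
        _ ≤ ((4 * δ : ℕ) : ℕ∞) + 2 := by push_cast; gcongr <;> norm_num
    · rw [← hγ'.2] at hlong
      obtain ⟨v, hv, hcv⟩ := hγ'.exists_dist_eq (n := δ + 1) (by exact_mod_cast hlong)
      obtain ⟨w, hw, hvw⟩ := hδ.exists_near_of_bigon hγ hγ' hv
      have hvw_lt : X.dist v w < X.dist c v := by
        rw [hcv]
        exact hvw.trans_lt (by exact_mod_cast Nat.lt_succ_self δ)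
      calc X.angle (X.rev e') e + 2 ≤ 2 * X.dist c v + 2 * X.dist v w :=
            MGraph.angle_rev_add_two_le hγ hγ' hv hw hvw_lt
        _ ≤ 2 * ((δ + 1 : ℕ) : ℕ∞) + 2 * δ := by rw [hcv]; gcongr
        _ = ((4 * δ : ℕ) : ℕ∞) + 2 := by push_cast; ring
  refine ((ENat.add_le_add_iff_right (by simp)).1 hbound).trans ?_
  exact_mod_cast (by omega : 4 * δ ≤ 6 * δ)

/-- if `e, e'` both originate at `c` and each is the first edge of
a geodesic from `c` to the same point `a`, then the angle at `c` between `e`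
and the reverse of `e'` is at most `6δ`. -/
theorem stmt_2 (X : MGraph) (δ : ℕ) (hδpos : 0 < δ) (hδ : X.Hyperbolic δ)
    (c a : X.V) (e e' : X.E) (he : X.o e = c) (he' : X.o e' = c)
    (hg : ∃ es, X.IsGeodesic (e :: es) c a) (hg' : ∃ es, X.IsGeodesic (e' :: es) c a) :
    X.angle (X.rev e') e ≤ ((6 * δ : ℕ) : ℕ∞) :=
  stmt_2_general X δ hδ c a e e' hg hg'
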